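/- Let X be a complex Banach space and f : ℕ₀ → X a finitely supported sequence. Then for all α, β ∈ ℝ, W^α(W^β f) = W^{α+β} f = W^β(W^α f), where for γ > 0 the operator W^γ is the Weyl difference of order γ, for γ < 0 it is the Weyl sum W^{-|γ|}, and W^0 is the identity. -/

import Mathlib

/-!
For `α > 0` the Cesàro kernel is `k^α(j) = α(α+1)⋯(α+j-1)/j!`, a formula that makes sense for
every real order. These kernels satisfy the Chu–Vandermonde identity `k^(γ+δ) = k^γ * k^δ`
(Cauchy product), so on finitely supported sequences the operators
`f ↦ ∑ j, k^γ(j) f(j + ·)` form a one-parameter group. Since `k^(-1) = (1, -1, 0, 0, …)`, the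
difference `Δ` is minus the operator of order `-1`; hence `(-1)^m Δ^m` is the operator of
order `-m`, and `W^α` is the operator of order `-α` for every real `α`.
-/

/-- The Cesàro kernel `k^α(n) = Γ(n+α)/(Γ(α)·Γ(n+1))`. -/
noncomputable def cesK (α : ℝ) (n : ℕ) : ℝ :=
  Real.Gamma ((n : ℝ) + α) / (Real.Gamma α * Real.Gamma ((n : ℝ) + 1))

/-- The Weyl sum of order `α`: `W^{-α}f(n) = ∑_{j=n}^∞ k^α(j-n)·f(j)`. -/
noncomputable def weylSum {X : Type*} [AddCommMonoid X] [Module ℝ X] (α : ℝ) (f : ℕ → X) :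
    ℕ → X :=
  fun n => ∑ᶠ j : ℕ, cesK α j • f (j + n)

/-- The forward difference operator `Δh(n) = h(n+1) - h(n)`. -/
def fdiff {X : Type*} [AddCommGroup X] (f : ℕ → X) : ℕ → X := fun n => f (n + 1) - f n

/-- The Weyl difference of order `α > 0`:
`W^α f(n) = (-1)^m Δ^m W^{-(m-α)} f(n)` with `m = [α]+1`; and `W^0 f = f`. -/
noncomputable def weylDiff {X : Type*} [AddCommGroup X] [Module ℝ X] (α : ℝ) (f : ℕ → X) :
    ℕ → X :=
  if α = 0 then f
  else ((-1 : ℝ) ^ (⌊α⌋₊ + 1)) • fdiff^[⌊α⌋₊ + 1] (weylSum ((⌊α⌋₊ : ℝ) + 1 - α) f)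

/-- The Weyl operator `W^α` for arbitrary real `α`: the Weyl difference of order `α`
for `α > 0`, the identity for `α = 0`, and the Weyl sum `W^{-|α|}` for `α < 0`. -/
noncomputable def weylOp {X : Type*} [AddCommGroup X] [Module ℝ X] (α : ℝ) (f : ℕ → X) :
    ℕ → X :=
  if 0 < α then weylDiff α f
  else if α < 0 then weylSum (-α) f
  else f

open Finset

namespace Ring

variable {R : Type*} [Ring R] [BinomialRing R]

theorem multichoose_eq_negOnePow_smul_choose (r : R) (n : ℕ) :
    multichoose r n = Int.negOnePow n • choose (-r) n := by
  rw [choose_neg', smul_smul, ← Int.negOnePow_add, Int.negOnePow_even _ ⟨n, rfl⟩, one_smul]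

theorem multichoose_add {r s : R} (h : Commute r s) (n : ℕ) :
    multichoose (r + s) n = ∑ ij ∈ antidiagonal n, multichoose r ij.1 * multichoose s ij.2 := by
  rw [multichoose_eq_negOnePow_smul_choose, neg_add, add_choose_eq _ h.neg_left.neg_right,
    smul_sum]
  refine sum_congr rfl fun ij hij => ?_
  rw [multichoose_eq_negOnePow_smul_choose r, multichoose_eq_negOnePow_smul_choose s,
    smul_mul_smul_comm, ← Int.negOnePow_add, ← Nat.cast_add, mem_antidiagonal.1 hij]

theorem multichoose_neg_one_add_two (n : ℕ) : multichoose (-1 : R) (n + 2) = 0 := by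
  have := multichoose_succ_succ (-1 : R) (n + 1)
  rwa [neg_add_cancel, multichoose_zero_succ, multichoose_zero_succ, add_zero, eq_comm] at this

end Ring

theorem Real.Gamma_add_nat_eq_mul_ascPochhammer {s : ℝ} (hs : ∀ m : ℕ, s ≠ -m) (n : ℕ) :
    Real.Gamma (n + s) = Real.Gamma s * (ascPochhammer ℝ n).eval s := by
  induction n with
  | zero => simp
  | succ n ih =>
    have hns : (n : ℝ) + s ≠ 0 := fun h => hs n (by linarith)
    rw [Nat.cast_succ, add_right_comm, Real.Gamma_add_one hns, ih, ascPochhammer_succ_eval]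
    ring

theorem cesK_eq_multichoose {α : ℝ} (hα : ∀ m : ℕ, α ≠ -m) (n : ℕ) :
    cesK α n = Ring.multichoose α n := by
  rw [cesK, Real.Gamma_add_nat_eq_mul_ascPochhammer hα, Real.Gamma_nat_eq_factorial,
    mul_div_mul_left _ _ (Real.Gamma_ne_zero hα), div_eq_iff (by positivity), mul_comm,
    ← nsmul_eq_mul, Ring.factorial_nsmul_multichoose_eq_ascPochhammer,
    Polynomial.ascPochhammer_smeval_eq_eval]

section CesaroSum

variable {X : Type*} [AddCommGroup X] [Module ℝ X]

/-- `Ring.multichoose γ j = γ(γ+1)⋯(γ+j-1)/j!` continues the Cesàro kernel `k^γ(j)` to every real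
`γ`; on finitely supported sequences `W^α = cesaroSum (-α)` for every real `α`. -/
noncomputable def cesaroSum (γ : ℝ) (f : ℕ → X) : ℕ → X :=
  fun n => ∑ᶠ j : ℕ, Ring.multichoose γ j • f (j + n)

theorem weylSum_eq_cesaroSum {α : ℝ} (hα : 0 < α) (f : ℕ → X) : weylSum α f = cesaroSum α f := by
  have hα' (m : ℕ) : α ≠ -m := by linarith [(m.cast_nonneg : (0 : ℝ) ≤ m)]
  funext n
  exact finsum_congr fun j => by rw [cesK_eq_multichoose hα']

theorem cesaroSum_smul (γ c : ℝ) (f : ℕ → X) : cesaroSum γ (c • f) = c • cesaroSum γ f := by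
  funext n
  simp only [cesaroSum, Pi.smul_apply, smul_finsum, smul_comm c]

theorem cesaroSum_zero (f : ℕ → X) : cesaroSum 0 f = f := by
  funext n
  rw [cesaroSum, finsum_eq_single _ 0, Ring.multichoose_zero_right, one_smul, zero_add]
  rintro (_ | j) hj
  · exact absurd rfl hj
  · rw [Ring.multichoose_zero_succ, zero_smul]

theorem cesaroSum_neg_one_apply (f : ℕ → X) (n : ℕ) :
    cesaroSum (-1) f n = f n - f (n + 1) := by
  have hsupp : Function.support (fun j => Ring.multichoose (-1 : ℝ) j • f (j + n)) ⊆
      ↑(range 2) := by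
    rintro (_ | _ | j) hj
    all_goals simp_all [Ring.multichoose_neg_one_add_two]
  rw [cesaroSum, finsum_eq_sum_of_support_subset _ hsupp, sum_range_succ, sum_range_one,
    Ring.multichoose_zero_right, Ring.multichoose_one_right, one_smul, neg_one_smul, zero_add,
    add_comm 1, sub_eq_add_neg]

theorem cesaroSum_eq_sum_Ico {f : ℕ → X} {N : ℕ} (hf : ∀ m, N ≤ m → f m = 0) (γ : ℝ) (n : ℕ) :
    cesaroSum γ f n = ∑ m ∈ Ico n N, Ring.multichoose γ (m - n) • f m := by
  rw [sum_Ico_eq_sum_range, cesaroSum]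
  simp only [add_comm n, add_tsub_cancel_right]
  apply finsum_eq_sum_of_support_subset
  intro j hj
  by_contra hjN
  simp only [coe_range, Set.mem_Iio, not_lt] at hjN
  exact hj (by simp only [hf (j + n) (by omega), smul_zero])

theorem cesaroSum_apply_eq_zero_of_le {f : ℕ → X} {N : ℕ} (hf : ∀ m, N ≤ m → f m = 0) (γ : ℝ) :
    ∀ n, N ≤ n → cesaroSum γ f n = 0 := by
  intro n hn
  rw [cesaroSum_eq_sum_Ico hf, Ico_eq_empty_of_le hn, sum_empty]

theorem sum_Ico_multichoose_mul_multichoose (γ δ : ℝ) {n m : ℕ} (hnm : n ≤ m) :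
    ∑ k ∈ Ico n (m + 1), Ring.multichoose γ (k - n) * Ring.multichoose δ (m - k) =
      Ring.multichoose (γ + δ) (m - n) := by
  obtain ⟨d, rfl⟩ := Nat.exists_eq_add_of_le hnm
  rw [sum_Ico_eq_sum_range, Ring.multichoose_add (Commute.all γ δ),
    Nat.sum_antidiagonal_eq_sum_range_succ (fun i j => Ring.multichoose γ i * Ring.multichoose δ j)]
  refine sum_congr (by congr 1; omega) fun i _ => ?_
  congr 2 <;> omega

theorem cesaroSum_cesaroSum {f : ℕ → X} {N : ℕ} (hf : ∀ m, N ≤ m → f m = 0) (γ δ : ℝ) :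
    cesaroSum γ (cesaroSum δ f) = cesaroSum (γ + δ) f := by
  funext n
  calc cesaroSum γ (cesaroSum δ f) n
      = ∑ k ∈ Ico n N, ∑ m ∈ Ico k N,
          (Ring.multichoose γ (k - n) * Ring.multichoose δ (m - k)) • f m := by
        rw [cesaroSum_eq_sum_Ico (cesaroSum_apply_eq_zero_of_le hf δ)]
        refine sum_congr rfl fun k _ => ?_
        simp only [cesaroSum_eq_sum_Ico hf, smul_sum, smul_smul]
    _ = ∑ m ∈ Ico n N, (∑ k ∈ Ico n (m + 1),
          Ring.multichoose γ (k - n) * Ring.multichoose δ (m - k)) • f m := by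
        simp only [sum_Ico_Ico_comm, sum_smul]
    _ = cesaroSum (γ + δ) f n := by
        rw [cesaroSum_eq_sum_Ico hf]
        refine sum_congr rfl fun m hm => ?_
        rw [sum_Ico_multichoose_mul_multichoose γ δ (mem_Ico.1 hm).1]

theorem fdiff_eq_neg_cesaroSum (f : ℕ → X) : fdiff f = (-1 : ℝ) • cesaroSum (-1) f := by
  funext n
  rw [Pi.smul_apply, cesaroSum_neg_one_apply, fdiff, neg_one_smul, neg_sub]

theorem fdiff_iterate_eq_cesaroSum {f : ℕ → X} {N : ℕ} (hf : ∀ m, N ≤ m → f m = 0) (k : ℕ) :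
    fdiff^[k] f = ((-1 : ℝ) ^ k) • cesaroSum (-k) f := by
  induction k with
  | zero => simp [cesaroSum_zero]
  | succ k ih =>
    rw [Function.iterate_succ_apply', ih, fdiff_eq_neg_cesaroSum, cesaroSum_smul, smul_smul,
      ← pow_succ', cesaroSum_cesaroSum hf, Nat.cast_succ, neg_add_rev]

theorem weylOp_eq_cesaroSum {f : ℕ → X} {N : ℕ} (hf : ∀ m, N ≤ m → f m = 0) (α : ℝ) :
    weylOp α f = cesaroSum (-α) f := by
  rcases lt_trichotomy α 0 with hα | rfl | hα
  · rw [weylOp, if_neg (by linarith), if_pos hα, weylSum_eq_cesaroSum (by linarith)]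
  · rw [weylOp, if_neg (lt_irrefl 0), if_neg (lt_irrefl 0), neg_zero, cesaroSum_zero]
  · have hm : 0 < (⌊α⌋₊ : ℝ) + 1 - α := by linarith [Nat.lt_floor_add_one α]
    rw [weylOp, if_pos hα, weylDiff, if_neg hα.ne', weylSum_eq_cesaroSum hm,
      fdiff_iterate_eq_cesaroSum (cesaroSum_apply_eq_zero_of_le hf _), cesaroSum_cesaroSum hf,
      smul_smul, ← pow_add, Even.neg_one_pow ⟨_, rfl⟩, one_smul]
    congr 1
    push_cast
    ring

end CesaroSum

theorem stmt4_general {X : Type*} [NormedAddCommGroup X] [NormedSpace ℂ X]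
    (f : ℕ → X) (hf : (Function.support f).Finite) (α β : ℝ) :
    weylOp α (weylOp β f) = weylOp (α + β) f ∧
      weylOp (α + β) f = weylOp β (weylOp α f) := by
  obtain ⟨N, hN⟩ := hf.bddAbove
  have hf' (m : ℕ) (hm : N + 1 ≤ m) : f m = 0 :=
    Function.notMem_support.1 fun h => absurd (hN h) (by omega)
  have weylOp_weylOp (γ δ : ℝ) : weylOp γ (weylOp δ f) = weylOp (γ + δ) f := by
    rw [weylOp_eq_cesaroSum hf', weylOp_eq_cesaroSum (cesaroSum_apply_eq_zero_of_le hf' _),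
      weylOp_eq_cesaroSum hf', cesaroSum_cesaroSum hf', neg_add]
  exact ⟨weylOp_weylOp α β, by rw [weylOp_weylOp β α, add_comm]⟩

theorem stmt4 {X : Type*} [NormedAddCommGroup X] [NormedSpace ℂ X] [CompleteSpace X]
    (f : ℕ → X) (hf : (Function.support f).Finite) (α β : ℝ) :
    weylOp α (weylOp β f) = weylOp (α + β) f ∧
      weylOp (α + β) f = weylOp β (weylOp α f) :=
  stmt4_general f hf α β
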